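/- If m ≥ 3, then for every slot j ∈ {1,…,m}, the per-slot partial quality set function S ↦ −p^S(j)·log₂(p^S(j)) (with the convention 0·log₂ 0 = 0) is non-decreasing and submodular: for all finite S ⊆ T ⊆ {1,…,m} its value at S is at most its value at T, and for all finite X, Y ⊆ {1,…,m} its values satisfy f(X ∩ Y) + f(X ∪ Y) ≤ f(X) + f(Y). -/

import Mathlib

/-!
Padding the distances to `j` with `k` copies of `m`, the layer-cake formula gives
`I_k^S(j) = ∑_{t < m} (k - min k (N_t S))`, where `N_t S` counts the executed slots within
distance `t` of `j`. Each `N_t` is monotone and modular in `S`, so `min k ∘ N_t` is submodular;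
hence `I_k` and `ρ` are antitone and supermodular, and `p` is monotone and submodular with values
in `[0, 1/m]`. For `m ≥ 3` this interval lies in `[0, e⁻¹]`, where `x ↦ -x log x` is concave and
non-decreasing, and such a function of a monotone submodular function is again submodular.
-/

/-- Temporal distance between slots `j` and `e`. -/
def tdist (j e : ℕ) : ℕ := ((j : ℤ) - (e : ℤ)).natAbs

/-- Padded `k`-NN distance sum `I_k^S(j)`. -/
def Ik (m k : ℕ) (S : Finset ℕ) (j : ℕ) : ℕ :=
  if k ≤ S.card then
    (((S.val.map (fun e => tdist j e)).sort (· ≤ ·)).take k).sum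
  else
    (S.val.map (fun e => tdist j e)).sum + (k - S.card) * m

/-- Interpolation error ratio `ρ^S(j)`. -/
noncomputable def rho (m k : ℕ) (S : Finset ℕ) (j : ℕ) : ℝ :=
  if j ∈ S then 0 else (Ik m k S j : ℝ) / ((k : ℝ) * (m : ℝ))

/-- Subtask finishing probability `p^S(j)`. -/
noncomputable def prob (m k : ℕ) (S : Finset ℕ) (j : ℕ) : ℝ :=
  (1 / (m : ℝ)) * (1 - rho m k S j)

/-- Task quality `q(S)` (note `Real.logb 2 0 = 0`, so the convention
`0 · log₂ 0 = 0` holds definitionally). -/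
noncomputable def quality (m k : ℕ) (S : Finset ℕ) : ℝ :=
  ∑ j ∈ Finset.Icc 1 m, -(prob m k S j * Real.logb 2 (prob m k S j))

open Finset

lemma List.Pairwise.countP_le_take {α : Type*} [LinearOrder α] {l : List α}
    (hl : l.Pairwise (· ≤ ·)) (t : α) (k : ℕ) :
    (l.take k).countP (· ≤ t) = min k (l.countP (· ≤ t)) := by
  induction l generalizing k with
  | nil => simp
  | cons a l ih =>
    obtain ⟨ha, hl⟩ := List.pairwise_cons.mp hl
    cases k with
    | zero => simp
    | succ k =>
      by_cases hat : a ≤ t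
      · simp only [List.take_succ_cons, List.countP_cons, ih hl, hat, decide_true, if_true]
        omega
      · have hl0 : l.countP (· ≤ t) = 0 :=
          List.countP_eq_zero.mpr fun x hx hxt => hat ((ha x hx).trans (by simpa using hxt))
        simp [ih hl, hat, hl0]

lemma sum_range_ite_le (m a : ℕ) : ∑ t ∈ range m, (if a ≤ t then 1 else 0) = m - a := by
  rw [sum_boole, Nat.cast_id, ← Nat.card_Ico a m]
  congr 1
  ext t
  simp only [mem_filter, mem_range, mem_Ico]
  omega

lemma List.sum_add_sum_range_countP_le {m : ℕ} {l : List ℕ} (hl : ∀ x ∈ l, x ≤ m) :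
    l.sum + ∑ t ∈ Finset.range m, l.countP (· ≤ t) = l.length * m := by
  induction l with
  | nil => simp
  | cons a l ih =>
    have ha := hl a List.mem_cons_self
    have ih := ih fun x hx => hl x (List.mem_cons_of_mem a hx)
    simp only [List.sum_cons, List.countP_cons, decide_eq_true_eq, sum_add_distrib,
      sum_range_ite_le, List.length_cons]
    rw [Nat.add_mul, ← ih]
    omega

def nearCount (j : ℕ) (S : Finset ℕ) (t : ℕ) : ℕ := #{e ∈ S | tdist j e ≤ t}

lemma nearCount_mono {j t : ℕ} {S T : Finset ℕ} (h : S ⊆ T) : nearCount j S t ≤ nearCount j T t :=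
  card_le_card (filter_subset_filter _ h)

lemma nearCount_inter_add_union (j t : ℕ) (X Y : Finset ℕ) :
    nearCount j (X ∩ Y) t + nearCount j (X ∪ Y) t = nearCount j X t + nearCount j Y t := by
  rw [nearCount, nearCount, filter_inter_distrib, filter_union, add_comm,
    card_union_add_card_inter]
  rfl

section Ik

variable {m k j : ℕ}

lemma Ik_eq_sum_take_padded (S : Finset ℕ) :
    Ik m k S j = ((((S.val.map (fun e => tdist j e)).sort (· ≤ ·)) ++
      List.replicate k m).take k).sum := by
  have hlen : ((S.val.map (fun e => tdist j e)).sort (· ≤ ·)).length = #S := by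
    simp [Multiset.length_sort]
  rw [Ik]
  split_ifs with hk
  · rw [List.take_append_of_le_length (by omega)]
  · rw [List.take_append, List.take_of_length_le (by omega), List.take_replicate,
      List.sum_append, List.sum_replicate, hlen, min_eq_left (by omega), smul_eq_mul,
      ← Multiset.sum_coe, Multiset.sort_eq]

lemma Ik_add_sum_min_nearCount {S : Finset ℕ} (hS : ∀ e ∈ S, tdist j e ≤ m) :
    Ik m k S j + ∑ t ∈ range m, min k (nearCount j S t) = k * m := by
  set l := (S.val.map (fun e => tdist j e)).sort (· ≤ ·)
  have hl : ∀ x ∈ l, x ≤ m := by simpa [l, Multiset.mem_sort] using hS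
  have hpad : ∀ x ∈ l ++ List.replicate k m, x ≤ m := by
    intro x hx
    rcases List.mem_append.mp hx with hx | hx
    · exact hl x hx
    · exact (List.eq_of_mem_replicate hx).le
  have hsorted : (l ++ List.replicate k m).Pairwise (· ≤ ·) :=
    List.pairwise_append.mpr ⟨Multiset.pairwise_sort _ _,
      List.pairwise_replicate.mpr (Or.inr le_rfl),
      fun x hx y hy => (List.eq_of_mem_replicate hy).symm ▸ hl x hx⟩
  have hcount : ∀ t ∈ range m, min k (nearCount j S t) =
      ((l ++ List.replicate k m).take k).countP (· ≤ t) := by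
    intro t ht
    have hpadding : (List.replicate k m).countP (· ≤ t) = 0 :=
      List.countP_eq_zero.mpr fun x hx => by simp [List.eq_of_mem_replicate hx, mem_range.mp ht]
    have hdists : l.countP (· ≤ t) = nearCount j S t := by
      rw [← Multiset.coe_countP, Multiset.sort_eq, Multiset.countP_map]
      rfl
    rw [hsorted.countP_le_take, List.countP_append, hpadding, hdists, add_zero]
  rw [Ik_eq_sum_take_padded, sum_congr rfl hcount, List.sum_add_sum_range_countP_le
    fun x hx => hpad x (List.mem_of_mem_take hx)]
  simp [l, Multiset.length_sort]

lemma Ik_le_mul {S : Finset ℕ} (hS : ∀ e ∈ S, tdist j e ≤ m) : Ik m k S j ≤ k * m :=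
  Nat.le.intro (Ik_add_sum_min_nearCount hS)

lemma Ik_antitone {S T : Finset ℕ} (hST : S ⊆ T) (hT : ∀ e ∈ T, tdist j e ≤ m) :
    Ik m k T j ≤ Ik m k S j := by
  have hS := Ik_add_sum_min_nearCount (k := k) fun e he => hT e (hST he)
  have hT := Ik_add_sum_min_nearCount (k := k) hT
  have hsum : ∑ t ∈ range m, min k (nearCount j S t) ≤ ∑ t ∈ range m, min k (nearCount j T t) :=
    sum_le_sum fun t _ => min_le_min_left k (nearCount_mono hST)
  omega

lemma Ik_add_le_Ik_inter_add_Ik_union {X Y : Finset ℕ} (hX : ∀ e ∈ X, tdist j e ≤ m)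
    (hY : ∀ e ∈ Y, tdist j e ≤ m) :
    Ik m k X j + Ik m k Y j ≤ Ik m k (X ∩ Y) j + Ik m k (X ∪ Y) j := by
  have hXY : ∀ e ∈ X ∪ Y, tdist j e ≤ m := by
    simpa [or_imp, forall_and] using And.intro hX hY
  have eqX := Ik_add_sum_min_nearCount (k := k) hX
  have eqY := Ik_add_sum_min_nearCount (k := k) hY
  have eqI := Ik_add_sum_min_nearCount (k := k) (S := X ∩ Y) fun e he =>
    hX e (mem_of_mem_inter_left he)
  have eqU := Ik_add_sum_min_nearCount (k := k) hXY
  -- `min k` of a monotone modular count is submodular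
  have hsum : ∑ t ∈ range m, min k (nearCount j (X ∩ Y) t) +
        ∑ t ∈ range m, min k (nearCount j (X ∪ Y) t) ≤
      ∑ t ∈ range m, min k (nearCount j X t) + ∑ t ∈ range m, min k (nearCount j Y t) := by
    rw [← sum_add_distrib, ← sum_add_distrib]
    refine sum_le_sum fun t _ => ?_
    have := nearCount_inter_add_union j t X Y
    have := nearCount_mono (j := j) (t := t) (inter_subset_left (s₁ := X) (s₂ := Y))
    have := nearCount_mono (j := j) (t := t) (inter_subset_right (s₁ := X) (s₂ := Y))
    omega
  omega

end Ik

lemma tdist_le_of_mem_Icc {m j e : ℕ} (hj : j ∈ Icc 1 m) (he : e ∈ Icc 1 m) : tdist j e ≤ m := by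
  simp only [mem_Icc] at hj he
  unfold tdist
  omega

section Slots

variable {m k j : ℕ}

lemma rho_nonneg (S : Finset ℕ) : 0 ≤ rho m k S j := by
  unfold rho
  split_ifs <;> positivity

lemma rho_le_one {S : Finset ℕ} (hj : j ∈ Icc 1 m) (hS : S ⊆ Icc 1 m) : rho m k S j ≤ 1 := by
  unfold rho
  split_ifs
  · exact zero_le_one
  · refine div_le_one_of_le₀ ?_ (by positivity)
    exact_mod_cast Ik_le_mul fun e he => tdist_le_of_mem_Icc hj (hS he)

lemma rho_antitone {S T : Finset ℕ} (hj : j ∈ Icc 1 m) (hT : T ⊆ Icc 1 m) (hST : S ⊆ T) :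
    rho m k T j ≤ rho m k S j := by
  by_cases hjT : j ∈ T
  · simpa [rho, hjT] using rho_nonneg S
  · rw [rho, rho, if_neg hjT, if_neg fun hjS => hjT (hST hjS)]
    gcongr
    exact Ik_antitone hST fun e he => tdist_le_of_mem_Icc hj (hT he)

lemma rho_add_le_rho_inter_add_rho_union {X Y : Finset ℕ} (hj : j ∈ Icc 1 m)
    (hX : X ⊆ Icc 1 m) (hY : Y ⊆ Icc 1 m) :
    rho m k X j + rho m k Y j ≤ rho m k (X ∩ Y) j + rho m k (X ∪ Y) j := by
  by_cases hjX : j ∈ X <;> by_cases hjY : j ∈ Y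
  · simp [rho, hjX, hjY]
  · have := rho_antitone (k := k) hj hY (inter_subset_right (s₁ := X))
    simp_all [rho]
  · have := rho_antitone (k := k) hj hX (inter_subset_left (s₂ := Y))
    simp_all [rho]
  · simp only [rho, mem_inter, mem_union, hjX, hjY, if_false, and_false, or_false]
    rw [← add_div, ← add_div]
    refine div_le_div_of_nonneg_right ?_ (by positivity)
    exact_mod_cast Ik_add_le_Ik_inter_add_Ik_union
      (fun e he => tdist_le_of_mem_Icc hj (hX he)) (fun e he => tdist_le_of_mem_Icc hj (hY he))

lemma prob_mem_Icc {S : Finset ℕ} (hj : j ∈ Icc 1 m) (hS : S ⊆ Icc 1 m) :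
    prob m k S j ∈ Set.Icc (0 : ℝ) (1 / m) := by
  have h0 := rho_nonneg (m := m) (k := k) (j := j) S
  have h1 := rho_le_one (k := k) hj hS
  constructor
  · unfold prob
    exact mul_nonneg (by positivity) (by linarith)
  · unfold prob
    exact mul_le_of_le_one_right (by positivity) (by linarith)

lemma prob_mono {S T : Finset ℕ} (hj : j ∈ Icc 1 m) (hT : T ⊆ Icc 1 m) (hST : S ⊆ T) :
    prob m k S j ≤ prob m k T j := by
  unfold prob
  gcongr
  exact rho_antitone hj hT hST

lemma prob_inter_add_prob_union_le {X Y : Finset ℕ} (hj : j ∈ Icc 1 m)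
    (hX : X ⊆ Icc 1 m) (hY : Y ⊆ Icc 1 m) :
    prob m k (X ∩ Y) j + prob m k (X ∪ Y) j ≤ prob m k X j + prob m k Y j := by
  unfold prob
  rw [← mul_add, ← mul_add]
  refine mul_le_mul_of_nonneg_left ?_ (by positivity)
  linarith [rho_add_le_rho_inter_add_rho_union (k := k) hj hX hY]

end Slots

section FourPoint

variable {s : Set ℝ} {g : ℝ → ℝ} {a u v d : ℝ}

lemma ConcaveOn.slope_le_slope (hg : ConcaveOn ℝ s g) (ha : a ∈ s) (hd : d ∈ s) (hau : a < u)
    (huv : u ≤ v) (hvd : v < d) : (g d - g v) / (d - v) ≤ (g u - g a) / (u - a) := by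
  rcases huv.eq_or_lt with rfl | huv
  · exact hg.slope_anti_adjacent ha hd hau hvd
  · have hs := convex_iff_ordConnected.mp hg.1
    have hu : u ∈ s := hs.out ha hd ⟨hau.le, (huv.trans hvd).le⟩
    have hv : v ∈ s := hs.out ha hd ⟨(hau.trans huv).le, hvd.le⟩
    exact (hg.slope_anti_adjacent hu hd huv hvd).trans (hg.slope_anti_adjacent ha hv hau huv)

lemma ConcaveOn.add_le_add_of_sorted (hg : ConcaveOn ℝ s g) (hmono : MonotoneOn g s) (ha : a ∈ s)
    (hd : d ∈ s) (hau : a ≤ u) (huv : u ≤ v) (hvd : v ≤ d) (hsum : a + d ≤ u + v) :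
    g a + g d ≤ g u + g v := by
  have hu : u ∈ s := (convex_iff_ordConnected.mp hg.1).out ha hd ⟨hau, huv.trans hvd⟩
  rcases hau.eq_or_lt with rfl | hau
  · rw [le_antisymm hvd (by linarith)]
  rcases hvd.eq_or_lt with rfl | hvd
  · linarith [hmono ha hu hau.le]
  have hslope_nonneg : 0 ≤ (g u - g a) / (u - a) :=
    div_nonneg (sub_nonneg.mpr (hmono ha hu hau.le)) (sub_nonneg.mpr hau.le)
  have key : g d - g v ≤ g u - g a :=
    calc g d - g v = (g d - g v) / (d - v) * (d - v) := by field_simp [(sub_pos.mpr hvd).ne']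
      _ ≤ (g u - g a) / (u - a) * (d - v) :=
        mul_le_mul_of_nonneg_right (hg.slope_le_slope ha hd hau huv hvd) (sub_pos.mpr hvd).le
      _ ≤ (g u - g a) / (u - a) * (u - a) :=
        mul_le_mul_of_nonneg_left (by linarith) hslope_nonneg
      _ = g u - g a := by field_simp [(sub_pos.mpr hau).ne']
  linarith

lemma ConcaveOn.add_le_add_of_monotoneOn (hg : ConcaveOn ℝ s g) (hmono : MonotoneOn g s)
    (ha : a ∈ s) (hd : d ∈ s) (hau : a ≤ u) (hav : a ≤ v) (hud : u ≤ d) (hvd : v ≤ d)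
    (hsum : a + d ≤ u + v) : g a + g d ≤ g u + g v := by
  rcases le_total u v with huv | hvu
  · exact hg.add_le_add_of_sorted hmono ha hd hau huv hvd hsum
  · rw [add_comm (g u)]
    exact hg.add_le_add_of_sorted hmono ha hd hav hvu hud (by linarith)

end FourPoint

lemma Real.monotoneOn_negMulLog : MonotoneOn Real.negMulLog (Set.Icc 0 (Real.exp (-1))) := by
  rw [Real.negMulLog_eq_neg]
  exact Real.mul_log_strictAntiOn.antitoneOn.neg

lemma neg_mul_logb_two_eq (x : ℝ) : -(x * Real.logb 2 x) = Real.negMulLog x / Real.log 2 := by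
  rw [Real.logb, Real.negMulLog]
  ring

lemma one_div_le_exp_neg_one {m : ℕ} (hm : 3 ≤ m) : 1 / (m : ℝ) ≤ Real.exp (-1) := by
  have hm' : (3 : ℝ) ≤ m := by exact_mod_cast hm
  calc 1 / (m : ℝ) ≤ 1 / 3 := one_div_le_one_div_of_le (by norm_num) hm'
    _ ≤ Real.exp (-1) := le_trans (by norm_num) Real.exp_neg_one_gt_d9.le

theorem partial_quality_nondecreasing_submodular_general (m k : ℕ) (hm : 3 ≤ m)
    (j : ℕ) (hj : j ∈ Finset.Icc 1 m) :
    (∀ S T : Finset ℕ, T ⊆ Finset.Icc 1 m → S ⊆ T →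
      -(prob m k S j * Real.logb 2 (prob m k S j)) ≤
        -(prob m k T j * Real.logb 2 (prob m k T j))) ∧
    (∀ X Y : Finset ℕ, X ⊆ Finset.Icc 1 m → Y ⊆ Finset.Icc 1 m →
      -(prob m k (X ∩ Y) j * Real.logb 2 (prob m k (X ∩ Y) j)) +
        -(prob m k (X ∪ Y) j * Real.logb 2 (prob m k (X ∪ Y) j)) ≤
      -(prob m k X j * Real.logb 2 (prob m k X j)) +
        -(prob m k Y j * Real.logb 2 (prob m k Y j))) := by
  have hmem : ∀ S ⊆ Icc 1 m, prob m k S j ∈ Set.Icc 0 (Real.exp (-1)) := fun S hS =>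
    Set.Icc_subset_Icc_right (one_div_le_exp_neg_one hm) (prob_mem_Icc hj hS)
  have hconc : ConcaveOn ℝ (Set.Icc 0 (Real.exp (-1))) Real.negMulLog :=
    Real.concaveOn_negMulLog.subset Set.Icc_subset_Ici_self (convex_Icc _ _)
  simp only [neg_mul_logb_two_eq, ← add_div]
  refine ⟨fun S T hT hST => ?_, fun X Y hX hY => ?_⟩
  · gcongr
    exact Real.monotoneOn_negMulLog (hmem S (hST.trans hT)) (hmem T hT) (prob_mono hj hT hST)
  · have hU := union_subset hX hY
    refine div_le_div_of_nonneg_right ?_ (Real.log_pos one_lt_two).le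
    exact hconc.add_le_add_of_monotoneOn Real.monotoneOn_negMulLog
      (hmem _ (inter_subset_left.trans hX)) (hmem _ hU)
      (prob_mono hj hX inter_subset_left) (prob_mono hj hY inter_subset_right)
      (prob_mono hj hU subset_union_left) (prob_mono hj hU subset_union_right)
      (prob_inter_add_prob_union_le hj hX hY)

/-- If `m ≥ 3`, for every slot `j` the per-slot partial quality
`S ↦ −p^S(j)·log₂(p^S(j))` is non-decreasing and submodular. -/
theorem partial_quality_nondecreasing_submodular (m k : ℕ) (hm : 3 ≤ m)
    (hk : 1 ≤ k) (j : ℕ) (hj : j ∈ Finset.Icc 1 m) :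
    (∀ S T : Finset ℕ, T ⊆ Finset.Icc 1 m → S ⊆ T →
      -(prob m k S j * Real.logb 2 (prob m k S j)) ≤
        -(prob m k T j * Real.logb 2 (prob m k T j))) ∧
    (∀ X Y : Finset ℕ, X ⊆ Finset.Icc 1 m → Y ⊆ Finset.Icc 1 m →
      -(prob m k (X ∩ Y) j * Real.logb 2 (prob m k (X ∩ Y) j)) +
        -(prob m k (X ∪ Y) j * Real.logb 2 (prob m k (X ∪ Y) j)) ≤
      -(prob m k X j * Real.logb 2 (prob m k X j)) +
        -(prob m k Y j * Real.logb 2 (prob m k Y j))) :=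
  partial_quality_nondecreasing_submodular_general m k hm j hj
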